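/- Let α, β ∈ (0,1), let f ∈ L¹(G_m²), and let n, m, r, s be nonnegative integers with M_{r+1} − 1 ≤ n and M_{s+1} − 1 ≤ m. Then for almost every (x,y) ∈ G_m², ∫_{G_m²} Σ_{i=M_r}^{M_{r+1}−1} Σ_{j=M_s}^{M_{s+1}−1} A_{n−i+1}^{−α−1} A_{m−j+1}^{−β−1} D_i(u) D_j(v) [ S_{M_r,M_s}(x−u, y−v, f) − S_{M_r,M_s}(x, y, f) ] dμ(u,v) = 0. -/

import Mathlib

/-!
Expanding the partial sum, `S(x - u, y - v) - S(x, y)` is a linear combination of the functions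
`(u, v) ↦ conj ψ_{k₁}(u) conj ψ_{k₂}(v) - 1` with `k₁ < M_r ≤ i` and `k₂ < M_s ≤ j`. By
orthonormality of the Vilenkin system, `∫ D_i conj ψ_k = 1` whenever `k < i`, so each of these
integrates to zero against `D_i(u) D_j(v)`; the identity therefore holds at every point.

Orthonormality is computed coordinatewise: since `μ` is uniform on cylinders, integrating a function
of the first `N` coordinates is averaging over `∏_{k<N} Z_{m_k}`, and `ψ_a conj ψ_b` factors into
characters of the `Z_{m_k}`, whose sums vanish unless the digits of `a` and `b` agree.
-/

open MeasureTheory Filter Finset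
open scoped ENNReal NNReal Real

noncomputable section

namespace Vilenkin

/-- The bounded Vilenkin group: complete direct product of the cyclic groups `ZMod (m k)`. -/
abbrev G (m : ℕ → ℕ) : Type := ∀ k, ZMod (m k)

/-- The generalized number system `M 0 = 1`, `M (k+1) = m k * M k`. -/
def M (m : ℕ → ℕ) : ℕ → ℕ
  | 0 => 1
  | k + 1 => m k * M m k

/-- The cylinder neighbourhood `I n = {x | x 0 = ⋯ = x (n-1) = 0}`. -/
def I (m : ℕ → ℕ) (n : ℕ) : Set (G m) := {x | ∀ j < n, x j = 0}

/-- The `j`-th digit of `n` in the generalized number system based on `m`. -/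
def digit (m : ℕ → ℕ) (n j : ℕ) : ℕ := n / M m j % m j

/-- The generalized Rademacher functions `r k x = exp (2 π i x_k / m_k)`. -/
def rad (m : ℕ → ℕ) (k : ℕ) (x : G m) : ℂ :=
  Complex.exp (2 * Real.pi * Complex.I * ((x k).val : ℂ) / (m k : ℂ))

/-- The Vilenkin system `ψ n = ∏ k, (r k) ^ (n_k)`. -/
def psi (m : ℕ → ℕ) (n : ℕ) (x : G m) : ℂ :=
  ∏ k ∈ Finset.range (n + 1), rad m k x ^ digit m n k

/-- The Vilenkin-Dirichlet kernels `D n = ∑_{k<n} ψ k`. -/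
def D (m : ℕ → ℕ) (n : ℕ) (x : G m) : ℂ := ∑ k ∈ Finset.range n, psi m k x

/-- The Cesàro numbers `A n α = (α+1)⋯(α+n)/n!`. -/
def A (α : ℝ) (n : ℕ) : ℝ := (∏ i ∈ Finset.range n, (α + (i + 1))) / (n.factorial : ℝ)

/-- One-dimensional Vilenkin-Fourier coefficients. -/
def fhat1 (m : ℕ → ℕ) (μ : Measure (G m)) (f : G m → ℂ) (i : ℕ) : ℂ :=
  ∫ x, f x * (starRingEnd ℂ) (psi m i x) ∂μ

/-- One-dimensional `(C,-α)` Cesàro means of the Vilenkin-Fourier series. -/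
def cesaro1 (m : ℕ → ℕ) (μ : Measure (G m)) (α : ℝ) (f : G m → ℂ) (n : ℕ) (x : G m) : ℂ :=
  ((A (-α) n : ℝ) : ℂ)⁻¹ *
    ∑ i ∈ Finset.range (n + 1), ((A (-α) (n - i) : ℝ) : ℂ) * fhat1 m μ f i * psi m i x

/-- Double Vilenkin-Fourier coefficients. -/
def fhat2 (m : ℕ → ℕ) (μ : Measure (G m)) (f : G m × G m → ℂ) (i j : ℕ) : ℂ :=
  ∫ z, f z * (starRingEnd ℂ) (psi m i z.1) * (starRingEnd ℂ) (psi m j z.2) ∂(μ.prod μ)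

/-- Rectangular partial sums of the double Vilenkin-Fourier series. -/
def partialSum2 (m : ℕ → ℕ) (μ : Measure (G m)) (f : G m × G m → ℂ) (n₁ n₂ : ℕ)
    (z : G m × G m) : ℂ :=
  ∑ k₁ ∈ Finset.range n₁, ∑ k₂ ∈ Finset.range n₂,
    fhat2 m μ f k₁ k₂ * psi m k₁ z.1 * psi m k₂ z.2

/-- The `(C,-α,-β)` means of the double Vilenkin-Fourier series. -/
def cesaro2 (m : ℕ → ℕ) (μ : Measure (G m)) (α β : ℝ) (f : G m × G m → ℂ) (n₁ n₂ : ℕ)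
    (z : G m × G m) : ℂ :=
  ((A (-α) n₁ * A (-β) n₂ : ℝ) : ℂ)⁻¹ *
    ∑ i ∈ Finset.range (n₁ + 1), ∑ j ∈ Finset.range (n₂ + 1),
      ((A (-α) (n₁ - i) * A (-β) (n₂ - j) : ℝ) : ℂ) * fhat2 m μ f i j * psi m i z.1 * psi m j z.2

/-- One-dimensional modulus of continuity in `L^p`. -/
def omegaOne (m : ℕ → ℕ) (μ : Measure (G m)) (p : ℝ≥0∞) (f : G m → ℂ) (n : ℕ) : ℝ≥0∞ :=
  ⨆ u ∈ I m n, eLpNorm (fun x => f (x - u) - f x) p μ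

/-- First partial modulus of continuity in `L^p`. -/
def omega1 (m : ℕ → ℕ) (μ : Measure (G m)) (p : ℝ≥0∞) (f : G m × G m → ℂ) (n : ℕ) : ℝ≥0∞ :=
  ⨆ u ∈ I m n, eLpNorm (fun z => f (z.1 - u, z.2) - f z) p (μ.prod μ)

/-- Second partial modulus of continuity in `L^p`. -/
def omega2 (m : ℕ → ℕ) (μ : Measure (G m)) (p : ℝ≥0∞) (f : G m × G m → ℂ) (n : ℕ) : ℝ≥0∞ :=
  ⨆ v ∈ I m n, eLpNorm (fun z => f (z.1, z.2 - v) - f z) p (μ.prod μ)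

/-- Mixed modulus of continuity in `L^p`. -/
def omega12 (m : ℕ → ℕ) (μ : Measure (G m)) (p : ℝ≥0∞) (f : G m × G m → ℂ) (n l : ℕ) : ℝ≥0∞ :=
  ⨆ u ∈ I m n, ⨆ v ∈ I m l,
    eLpNorm (fun z => f (z.1 - u, z.2 - v) - f (z.1 - u, z.2) - f (z.1, z.2 - v) + f z) p
      (μ.prod μ)

/-- Total modulus of continuity in `L^p`. -/
def omegaT (m : ℕ → ℕ) (μ : Measure (G m)) (p : ℝ≥0∞) (f : G m × G m → ℂ) (n : ℕ) : ℝ≥0∞ :=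
  ⨆ u ∈ I m n, ⨆ v ∈ I m n, eLpNorm (fun z => f (z.1 - u, z.2 - v) - f z) p (μ.prod μ)

/-- Total modulus of continuity in the uniform norm. -/
def omegaC (m : ℕ → ℕ) (f : G m × G m → ℂ) (n : ℕ) : ℝ≥0∞ :=
  ⨆ u ∈ I m n, ⨆ v ∈ I m n, ⨆ z : G m × G m, (‖f (z.1 - u, z.2 - v) - f z‖₊ : ℝ≥0∞)

section NumberSystem

variable {m : ℕ → ℕ}

lemma M_eq_prod (N : ℕ) : M m N = ∏ k ∈ range N, m k := by
  induction N with
  | zero => rfl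
  | succ N ih => rw [prod_range_succ, ← ih, M, mul_comm]

lemma M_pos (hm : ∀ k, 0 < m k) (N : ℕ) : 0 < M m N := by
  rw [M_eq_prod]
  exact prod_pos fun k _ => hm k

lemma lt_M (hm2 : ∀ k, 2 ≤ m k) (N : ℕ) : N < M m N := by
  calc N < 2 ^ N := N.lt_two_pow_self
    _ ≤ M m N := by
      simpa [M_eq_prod] using pow_card_le_prod (range N) m 2 fun k _ => hm2 k

lemma digit_eq_zero_of_lt {n j : ℕ} (h : n < M m j) : digit m n j = 0 := by
  simp [digit, Nat.div_eq_of_lt h]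

lemma mod_M_eq_sum_digit (n N : ℕ) : n % M m N = ∑ k ∈ range N, digit m n k * M m k := by
  induction N with
  | zero => simp [M, Nat.mod_one]
  | succ N ih =>
    rw [M, mul_comm, Nat.mod_mul, ih, sum_range_succ, digit]
    ring

lemma eq_of_digit_eq {a b N : ℕ} (ha : a < M m N) (hb : b < M m N)
    (h : ∀ k < N, digit m a k = digit m b k) : a = b := by
  rw [← Nat.mod_eq_of_lt ha, ← Nat.mod_eq_of_lt hb, mod_M_eq_sum_digit, mod_M_eq_sum_digit]
  exact sum_congr rfl fun k hk => by rw [h k (mem_range.mp hk)]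

end NumberSystem

section Characters

variable {m : ℕ → ℕ}

lemma psi_zero (x : G m) : psi m 0 x = 1 := by
  simp [psi, digit]

@[fun_prop]
lemma measurable_psi (n : ℕ) : Measurable (psi m n) :=
  Finset.measurable_prod _ fun k _ =>
    ((Measurable.of_discrete (f := fun c : ZMod (m k) =>
      Complex.exp (2 * Real.pi * Complex.I * (c.val : ℂ) / (m k : ℂ)))).comp
      (measurable_pi_apply k)).pow_const _

@[fun_prop]
lemma measurable_D (n : ℕ) : Measurable (D m n) :=
  Finset.measurable_sum _ fun k _ => measurable_psi k

variable [∀ k, NeZero (m k)]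

lemma rad_eq_stdAddChar (k : ℕ) (x : G m) : rad m k x = ZMod.stdAddChar (x k) := by
  rw [rad, ZMod.stdAddChar_apply, ZMod.toCircle_apply]

lemma psi_eq_prod_stdAddChar (hm2 : ∀ k, 2 ≤ m k) {n N : ℕ} (hN : n < N) (x : G m) :
    psi m n x = ∏ k ∈ range N, ZMod.stdAddChar ((digit m n k : ZMod (m k)) * x k) := by
  have hfactor : ∀ k, rad m k x ^ digit m n k
      = ZMod.stdAddChar ((digit m n k : ZMod (m k)) * x k) := fun k => by
    rw [rad_eq_stdAddChar, ← AddChar.map_nsmul_eq_pow, nsmul_eq_mul]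
  simp only [psi, ← hfactor]
  refine prod_subset (range_subset_range.mpr hN) fun k _ hk => ?_
  have hnk : n < k := by simpa using hk
  rw [digit_eq_zero_of_lt (hnk.trans (lt_M hm2 k)), pow_zero]

lemma rad_sub (k : ℕ) (x u : G m) : rad m k (x - u) = rad m k x * starRingEnd ℂ (rad m k u) := by
  rw [rad_eq_stdAddChar, rad_eq_stdAddChar, rad_eq_stdAddChar, Pi.sub_apply, sub_eq_add_neg,
    AddChar.map_add_eq_mul, AddChar.map_neg_eq_conj]

lemma psi_sub (n : ℕ) (x u : G m) :
    psi m n (x - u) = psi m n x * starRingEnd ℂ (psi m n u) := by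
  simp only [psi, rad_sub, mul_pow, prod_mul_distrib, map_prod, map_pow]

lemma norm_psi (n : ℕ) (x : G m) : ‖psi m n x‖ = 1 := by
  simp [psi, rad_eq_stdAddChar, AddChar.norm_apply]

lemma norm_D_le (n : ℕ) (x : G m) : ‖D m n x‖ ≤ n := by
  simpa [D, norm_psi] using norm_sum_le (range n) (psi m · x)

end Characters

/-- The normalized Haar measure of `G m` is characterized by its values on cylinders. -/
def IsUniformOnCylinders (m : ℕ → ℕ) (μ : Measure (G m)) : Prop :=
  ∀ (n : ℕ) (x : G m), μ {y : G m | ∀ j < n, y j = x j} = (M m n : ℝ≥0∞)⁻¹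

section Orthonormality

variable {m : ℕ → ℕ} [∀ k, NeZero (m k)] {μ : Measure (G m)}

lemma integral_comp_restrict_range [IsFiniteMeasure μ] (hμ : IsUniformOnCylinders m μ) (N : ℕ)
    (g : (∀ k : range N, ZMod (m k)) → ℂ) :
    ∫ x, g ((range N).restrict x) ∂μ = (M m N : ℂ)⁻¹ * ∑ t, g t := by
  classical
  have hfiber (t : ∀ k : range N, ZMod (m k)) :
      μ.real ((range N).restrict ⁻¹' {t}) = (M m N : ℝ)⁻¹ := by
    let x : G m := fun k => if h : k ∈ range N then t ⟨k, h⟩ else 0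
    have : ((range N).restrict : G m → ∀ k : range N, ZMod (m k)) ⁻¹' {t}
        = {y : G m | ∀ j < N, y j = x j} := by
      ext y
      simp +contextual [x, funext_iff]
    rw [measureReal_def, this, hμ, ENNReal.toReal_inv, ENNReal.toReal_natCast]
  rw [← integral_map (measurable_restrict _).aemeasurable
      (Measurable.of_discrete.aestronglyMeasurable), integral_fintype (.of_finite), mul_sum]
  refine sum_congr rfl fun t _ => ?_
  rw [measureReal_def, Measure.map_apply (measurable_restrict _) (measurableSet_singleton t),
    ← measureReal_def, hfiber, Complex.real_smul, Complex.ofReal_inv, Complex.ofReal_natCast]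

lemma integral_prod_range [IsFiniteMeasure μ] (hμ : IsUniformOnCylinders m μ) (N : ℕ)
    (g : ∀ k, ZMod (m k) → ℂ) :
    ∫ x, ∏ k ∈ range N, g k (x k) ∂μ = (M m N : ℂ)⁻¹ * ∏ k ∈ range N, ∑ c, g k c := by
  classical
  simp_rw [← prod_coe_sort (range N)]
  rw [Fintype.prod_sum]
  exact integral_comp_restrict_range hμ N fun t => ∏ k : range N, g k (t k)

lemma integral_psi_mul_conj_psi [IsFiniteMeasure μ] (hm2 : ∀ k, 2 ≤ m k)
    (hμ : IsUniformOnCylinders m μ) (a b : ℕ) :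
    ∫ x, psi m a x * starRingEnd ℂ (psi m b x) ∂μ = if a = b then 1 else 0 := by
  set N := a + b + 1
  have haN : a < N := by omega
  have hbN : b < N := by omega
  set δ : ∀ k, ZMod (m k) := fun k => (digit m a k : ZMod (m k)) - (digit m b k : ZMod (m k))
  have hprod (x : G m) : psi m a x * starRingEnd ℂ (psi m b x)
      = ∏ k ∈ range N, ZMod.stdAddChar (x k * δ k) := by
    rw [psi_eq_prod_stdAddChar hm2 haN, psi_eq_prod_stdAddChar hm2 hbN, map_prod,
      ← prod_mul_distrib]
    refine prod_congr rfl fun k _ => ?_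
    rw [← AddChar.map_neg_eq_conj, ← AddChar.map_add_eq_mul, mul_sub]
    ring_nf
  have hsum (k : ℕ) : ∑ c : ZMod (m k), ZMod.stdAddChar (c * δ k)
      = if digit m a k = digit m b k then (m k : ℂ) else 0 := by
    have hcast : (digit m a k : ZMod (m k)) = digit m b k ↔ digit m a k = digit m b k := by
      rw [ZMod.natCast_eq_natCast_iff', digit, digit, Nat.mod_mod, Nat.mod_mod]
    rw [AddChar.sum_mulShift _ (ZMod.isPrimitive_stdAddChar _)]
    simp only [δ, sub_eq_zero, hcast, ZMod.card]
    split_ifs <;> simp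
  simp_rw [hprod]
  rw [integral_prod_range hμ N fun k c => ZMod.stdAddChar (c * δ k),
    prod_congr rfl fun k _ => hsum k]
  by_cases hab : a = b
  · subst hab
    have hM : (M m N : ℂ) ≠ 0 := by exact_mod_cast (M_pos (fun k => NeZero.pos _) N).ne'
    rw [prod_congr rfl fun k _ => if_pos rfl, ← Nat.cast_prod, ← M_eq_prod, inv_mul_cancel₀ hM,
      if_pos rfl]
  · obtain ⟨k, hk, hne⟩ : ∃ k < N, digit m a k ≠ digit m b k := by
      by_contra! h
      exact hab (eq_of_digit_eq (haN.trans (lt_M hm2 N)) (hbN.trans (lt_M hm2 N)) h)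
    rw [prod_eq_zero (mem_range.mpr hk) (if_neg hne), mul_zero, if_neg hab]

end Orthonormality

section DirichletKernel

variable {m : ℕ → ℕ} [∀ k, NeZero (m k)] {μ : Measure (G m)} [IsFiniteMeasure μ]

lemma integrable_psi_mul_conj_psi (a b : ℕ) :
    Integrable (fun x => psi m a x * starRingEnd ℂ (psi m b x)) μ :=
  .of_bound (by fun_prop) 1
    (ae_of_all _ fun x => by simp [norm_psi])

lemma integrable_D (n : ℕ) : Integrable (D m n) μ :=
  .of_bound (measurable_D n).aestronglyMeasurable n (ae_of_all _ (norm_D_le n))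

lemma integrable_D_mul_psi_sub (i k : ℕ) (x : G m) :
    Integrable (fun u => D m i u * psi m k (x - u)) μ := by
  simp_rw [psi_sub]
  refine .of_bound ?_ i (ae_of_all _ fun u => ?_)
  · fun_prop
  · simpa [norm_psi] using norm_D_le i u

lemma integral_D_mul_conj_psi (hm2 : ∀ k, 2 ≤ m k) (hμ : IsUniformOnCylinders m μ) {i k : ℕ}
    (hk : k < i) : ∫ x, D m i x * starRingEnd ℂ (psi m k x) ∂μ = 1 := by
  simp_rw [D, sum_mul]
  rw [integral_finsetSum _ fun l _ => integrable_psi_mul_conj_psi l k]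
  simp_rw [integral_psi_mul_conj_psi hm2 hμ]
  rw [sum_ite_eq', if_pos (mem_range.mpr hk)]

lemma integral_D (hm2 : ∀ k, 2 ≤ m k) (hμ : IsUniformOnCylinders m μ) {i : ℕ} (hi : 0 < i) :
    ∫ x, D m i x ∂μ = 1 := by
  simpa [psi_zero] using integral_D_mul_conj_psi hm2 hμ hi

lemma integral_D_mul_psi_sub (hm2 : ∀ k, 2 ≤ m k) (hμ : IsUniformOnCylinders m μ) {i k : ℕ}
    (hk : k < i) (x : G m) : ∫ u, D m i u * psi m k (x - u) ∂μ = psi m k x := by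
  simp_rw [psi_sub, mul_left_comm (D m i _)]
  rw [integral_const_mul, integral_D_mul_conj_psi hm2 hμ hk, mul_one]

end DirichletKernel

section ProductKernel

variable {m : ℕ → ℕ} (ν : Measure (G m)) (f : G m × G m → ℂ) {n₁ n₂ i j : ℕ}

lemma D_mul_D_mul_partialSum2_sub (z w : G m × G m) :
    D m i w.1 * D m j w.2 * partialSum2 m ν f n₁ n₂ (z.1 - w.1, z.2 - w.2)
      = ∑ k₁ ∈ range n₁, ∑ k₂ ∈ range n₂, fhat2 m ν f k₁ k₂ *
          ((D m i w.1 * psi m k₁ (z.1 - w.1)) * (D m j w.2 * psi m k₂ (z.2 - w.2))) := by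
  simp only [partialSum2, mul_sum]
  exact sum_congr rfl fun _ _ => sum_congr rfl fun _ _ => by ring

variable [∀ k, NeZero (m k)] {μ : Measure (G m)} [IsFiniteMeasure μ]

lemma integrable_D_mul_D_mul_partialSum2_sub (z : G m × G m) :
    Integrable (fun w : G m × G m =>
      D m i w.1 * D m j w.2 * partialSum2 m ν f n₁ n₂ (z.1 - w.1, z.2 - w.2)) (μ.prod μ) := by
  simp_rw [D_mul_D_mul_partialSum2_sub]
  exact integrable_finsetSum _ fun k₁ _ => integrable_finsetSum _ fun k₂ _ =>
    ((integrable_D_mul_psi_sub i k₁ z.1).mul_prod (integrable_D_mul_psi_sub j k₂ z.2)).const_mul _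

lemma integral_D_mul_D_mul_partialSum2_sub (hm2 : ∀ k, 2 ≤ m k) (hμ : IsUniformOnCylinders m μ)
    (hi : n₁ ≤ i) (hj : n₂ ≤ j) (z : G m × G m) :
    ∫ w : G m × G m, D m i w.1 * D m j w.2 * partialSum2 m ν f n₁ n₂ (z.1 - w.1, z.2 - w.2)
      ∂(μ.prod μ) = partialSum2 m ν f n₁ n₂ z := by
  have hint (k₁ k₂ : ℕ) :=
    (integrable_D_mul_psi_sub (μ := μ) i k₁ z.1).mul_prod
      (integrable_D_mul_psi_sub (μ := μ) j k₂ z.2)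
  simp_rw [D_mul_D_mul_partialSum2_sub]
  rw [integral_finsetSum _ fun k₁ _ => integrable_finsetSum _ fun k₂ _ => (hint k₁ k₂).const_mul _]
  refine sum_congr rfl fun k₁ hk₁ => ?_
  rw [integral_finsetSum _ fun k₂ _ => (hint k₁ k₂).const_mul _]
  refine sum_congr rfl fun k₂ hk₂ => ?_
  rw [integral_const_mul, integral_prod_mul (fun u => D m i u * psi m k₁ (z.1 - u))
      (fun v => D m j v * psi m k₂ (z.2 - v)),
    integral_D_mul_psi_sub hm2 hμ ((mem_range.mp hk₁).trans_le hi),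
    integral_D_mul_psi_sub hm2 hμ ((mem_range.mp hk₂).trans_le hj), mul_assoc]

lemma integral_D_mul_D (hm2 : ∀ k, 2 ≤ m k) (hμ : IsUniformOnCylinders m μ) (hi : 0 < i)
    (hj : 0 < j) : ∫ w : G m × G m, D m i w.1 * D m j w.2 ∂(μ.prod μ) = 1 := by
  rw [integral_prod_mul, integral_D hm2 hμ hi, integral_D hm2 hμ hj, mul_one]

lemma integrable_D_mul_D_mul_partialSum2_sub_sub (z : G m × G m) :
    Integrable (fun w : G m × G m => D m i w.1 * D m j w.2 *
      (partialSum2 m ν f n₁ n₂ (z.1 - w.1, z.2 - w.2) - partialSum2 m ν f n₁ n₂ z))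
      (μ.prod μ) := by
  simp_rw [mul_sub]
  exact (integrable_D_mul_D_mul_partialSum2_sub ν f z).sub
    (((integrable_D i).mul_prod (integrable_D j)).mul_const _)

lemma integral_D_mul_D_mul_partialSum2_sub_sub (hm2 : ∀ k, 2 ≤ m k)
    (hμ : IsUniformOnCylinders m μ) (hi : n₁ ≤ i) (hj : n₂ ≤ j) (hi₀ : 0 < i) (hj₀ : 0 < j)
    (z : G m × G m) :
    ∫ w : G m × G m, D m i w.1 * D m j w.2 *
      (partialSum2 m ν f n₁ n₂ (z.1 - w.1, z.2 - w.2) - partialSum2 m ν f n₁ n₂ z)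
      ∂(μ.prod μ) = 0 := by
  simp_rw [mul_sub]
  rw [integral_sub (integrable_D_mul_D_mul_partialSum2_sub ν f z)
      (((integrable_D i).mul_prod (integrable_D j)).mul_const _),
    integral_D_mul_D_mul_partialSum2_sub ν f hm2 hμ hi hj, integral_mul_const,
    integral_D_mul_D hm2 hμ hi₀ hj₀, one_mul, sub_self]

end ProductKernel

theorem statement_13_general (m : ℕ → ℕ) (hm2 : ∀ k, 2 ≤ m k)
    (μ : Measure (G m)) [IsProbabilityMeasure μ]
    (hμ : ∀ (n : ℕ) (x : G m), μ {y : G m | ∀ j < n, y j = x j} = (M m n : ℝ≥0∞)⁻¹)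
    (α β : ℝ)
    (f : G m × G m → ℂ)
    (n₁ n₂ r s : ℕ) :
    ∀ᵐ z ∂(μ.prod μ),
      (∫ w : G m × G m,
        (∑ i ∈ Finset.Icc (M m r) (M m (r + 1) - 1), ∑ j ∈ Finset.Icc (M m s) (M m (s + 1) - 1),
          ((A (-α - 1) (n₁ - i + 1) * A (-β - 1) (n₂ - j + 1) : ℝ) : ℂ) * D m i w.1 * D m j w.2) *
          (partialSum2 m μ f (M m r) (M m s) (z.1 - w.1, z.2 - w.2)
            - partialSum2 m μ f (M m r) (M m s) z) ∂(μ.prod μ)) = 0 := by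
  have : ∀ k, NeZero (m k) := fun k => ⟨by linarith [hm2 k]⟩
  refine Eventually.of_forall fun z => ?_
  set S := partialSum2 m μ f (M m r) (M m s)
  have hassoc (c : ℂ) (i j : ℕ) (w : G m × G m) :
      c * D m i w.1 * D m j w.2 * (S (z.1 - w.1, z.2 - w.2) - S z)
        = c * (D m i w.1 * D m j w.2 * (S (z.1 - w.1, z.2 - w.2) - S z)) := by ring
  have hint (i j : ℕ) : Integrable (fun w : G m × G m =>
      D m i w.1 * D m j w.2 * (S (z.1 - w.1, z.2 - w.2) - S z)) (μ.prod μ) :=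
    integrable_D_mul_D_mul_partialSum2_sub_sub μ f z
  simp_rw [sum_mul, hassoc]
  rw [integral_finsetSum _ fun i _ => integrable_finsetSum _ fun j _ => (hint i j).const_mul _]
  refine sum_eq_zero fun i hi => ?_
  rw [integral_finsetSum _ fun j _ => (hint i j).const_mul _]
  refine sum_eq_zero fun j hj => ?_
  have hMpos (t : ℕ) : 0 < M m t := M_pos (fun k => NeZero.pos (m k)) t
  rw [integral_const_mul, integral_D_mul_D_mul_partialSum2_sub_sub μ f hm2 hμ
    (mem_Icc.mp hi).1 (mem_Icc.mp hj).1 ((hMpos r).trans_le (mem_Icc.mp hi).1)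
    ((hMpos s).trans_le (mem_Icc.mp hj).1), mul_zero]

theorem statement_13 (m : ℕ → ℕ) (hm2 : ∀ k, 2 ≤ m k) (hmbd : ∃ B, ∀ k, m k ≤ B)
    (μ : Measure (G m)) [IsProbabilityMeasure μ]
    (hμ : ∀ (n : ℕ) (x : G m), μ {y : G m | ∀ j < n, y j = x j} = (M m n : ℝ≥0∞)⁻¹)
    (α β : ℝ) (hα : α ∈ Set.Ioo (0 : ℝ) 1) (hβ : β ∈ Set.Ioo (0 : ℝ) 1)
    (f : G m × G m → ℂ) (hf : MemLp f 1 (μ.prod μ))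
    (n₁ n₂ r s : ℕ) (hn₁ : M m (r + 1) - 1 ≤ n₁) (hn₂ : M m (s + 1) - 1 ≤ n₂) :
    ∀ᵐ z ∂(μ.prod μ),
      (∫ w : G m × G m,
        (∑ i ∈ Finset.Icc (M m r) (M m (r + 1) - 1), ∑ j ∈ Finset.Icc (M m s) (M m (s + 1) - 1),
          ((A (-α - 1) (n₁ - i + 1) * A (-β - 1) (n₂ - j + 1) : ℝ) : ℂ) * D m i w.1 * D m j w.2) *
          (partialSum2 m μ f (M m r) (M m s) (z.1 - w.1, z.2 - w.2)
            - partialSum2 m μ f (M m r) (M m s) z) ∂(μ.prod μ)) = 0 :=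
  statement_13_general m hm2 μ hμ α β f n₁ n₂ r s

end Vilenkin
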